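/- arXiv:1602.06716 — 3 statements merged into one kernel-verified Lean document; each statement's English description precedes it below -/
import Mathlib

section
/- Let X be a measurable space with finite measure μ and let F be a bounded, equi-integrable family in L^1(X, μ). Then there exists a nondecreasing convex continuous function θ : [0,∞) → [0,∞] with θ(t)/t → ∞ as t → ∞ such that ∫_X θ(|f|) dμ ≤ 1 for all f ∈ F. -/
/-!
Equi-integrability together with the uniform `L¹` bound gives, through Markov's inequality,
thresholds `aₙ ≥ n` with `∫_{|f| > aₙ} |f| ≤ εₙ` for all `f ∈ F`, where `∑ εₙ ≤ 1`.
Then `θ t = ∑ₙ (t - aₙ)⁺` works: at each `t` only finitely many summands are nonzero, each is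
convex and nondecreasing, `θ t ≥ N t - (a₀ + ⋯ + a_{N-1})` for every `N`, and
`∫ (|f| - aₙ)⁺ ≤ ∫_{|f| > aₙ} |f| ≤ εₙ`.
-/

open MeasureTheory ENNReal Filter

theorem ConvexOn.tsum {E ι : Type*} [AddCommMonoid E] [Module ℝ E] {s : Set E}
    (hs : Convex ℝ s) {f : ι → E → ℝ} (hf : ∀ i, ConvexOn ℝ s (f i))
    (hsum : ∀ x ∈ s, Summable (f · x)) :
    ConvexOn ℝ s (fun x => ∑' i, f i x) := by
  refine ⟨hs, fun x hx y hy p q hp hq hpq => ?_⟩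
  have hsumx := (hsum x hx).mul_left p
  have hsumy := (hsum y hy).mul_left q
  calc ∑' i, f i (p • x + q • y) ≤ ∑' i, (p * f i x + q * f i y) :=
        (hsum _ (hs hx hy hp hq hpq)).tsum_le_tsum (fun i => (hf i).2 hx hy hp hq hpq)
          (hsumx.add hsumy)
    _ = p • ∑' i, f i x + q • ∑' i, f i y := by
        rw [hsumx.tsum_add hsumy, tsum_mul_left, tsum_mul_left, smul_eq_mul, smul_eq_mul]

noncomputable def hingeSum (a : ℕ → ℝ) (t : ℝ) : ℝ := ∑' n, max (t - a n) 0

namespace hingeSum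

variable {a : ℕ → ℝ}

theorem nonneg (t : ℝ) : 0 ≤ hingeSum a t :=
  tsum_nonneg fun _ => le_max_right _ _

theorem summable (ha : Tendsto a atTop atTop) (t : ℝ) :
    Summable fun n => max (t - a n) 0 := by
  refine summable_of_hasFiniteSupport ?_
  have hfin : ∀ᶠ n in cofinite, t ≤ a n := Nat.cofinite_eq_atTop ▸ ha.eventually_ge_atTop t
  refine (eventually_cofinite.1 hfin).subset fun n hn => ?_
  simp only [Function.mem_support, ne_eq, max_eq_right_iff, sub_nonpos] at hn
  exact hn

theorem monotone (ha : Tendsto a atTop atTop) : Monotone (hingeSum a) := fun s t hst =>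
  (summable ha s).tsum_le_tsum (fun _ => max_le_max (by linarith) le_rfl) (summable ha t)

theorem convexOn (ha : Tendsto a atTop atTop) : ConvexOn ℝ Set.univ (hingeSum a) :=
  ConvexOn.tsum convex_univ
    (fun _ => ((convexOn_id convex_univ).sub (concaveOn_const _ convex_univ)).sup
      (convexOn_const 0 convex_univ))
    (fun t _ => summable ha t)

theorem continuous (ha : Tendsto a atTop atTop) : Continuous (hingeSum a) :=
  (convexOn ha).locallyLipschitz.continuous

theorem tendsto_div_atTop (ha : Tendsto a atTop atTop) :
    Tendsto (fun t => hingeSum a t / t) atTop atTop := by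
  refine tendsto_atTop.2 fun M => ?_
  obtain ⟨N, hN⟩ := exists_nat_gt (M + 1)
  set S := ∑ n ∈ Finset.range N, a n
  filter_upwards [eventually_ge_atTop (max 1 S)] with t ht
  have ht1 : 1 ≤ t := le_of_max_le_left ht
  have htS : S ≤ t := le_of_max_le_right ht
  have hlow : N * t - S ≤ hingeSum a t :=
    calc N * t - S = ∑ n ∈ Finset.range N, (t - a n) := by
          simp [S, Finset.sum_sub_distrib]
      _ ≤ ∑ n ∈ Finset.range N, max (t - a n) 0 :=
          Finset.sum_le_sum fun n _ => le_max_left _ _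
      _ ≤ hingeSum a t :=
          (summable ha t).sum_le_tsum _ fun n _ => le_max_right _ _
  rw [le_div_iff₀ (by linarith)]
  nlinarith

end hingeSum

section

variable {X : Type*} [MeasurableSpace X] {μ : Measure X}

theorem lintegral_ofReal_max_abs_sub_le (f : X → ℝ) {c : ℝ} (hc : 0 ≤ c) :
    ∫⁻ x, ENNReal.ofReal (max (|f x| - c) 0) ∂μ ≤ ∫⁻ x in {x | c < |f x|}, ‖f x‖ₑ ∂μ := by
  refine le_trans (lintegral_mono fun x => ?_) (lintegral_indicator_le _ _)
  by_cases hx : c < |f x|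
  · rw [Set.indicator_of_mem (by exact hx), Real.enorm_eq_ofReal_abs]
    exact ENNReal.ofReal_le_ofReal (max_le (by linarith) (abs_nonneg _))
  · rw [Set.indicator_of_notMem (by exact hx), max_eq_right (by linarith), ENNReal.ofReal_zero]

theorem lintegral_ofReal_hingeSum_abs_le {a : ℕ → ℝ} (ha : Tendsto a atTop atTop)
    (ha₀ : ∀ n, 0 ≤ a n) {f : X → ℝ} (hf : AEMeasurable f μ) :
    ∫⁻ x, ENNReal.ofReal (hingeSum a |f x|) ∂μ ≤
      ∑' n, ∫⁻ x in {x | a n < |f x|}, ‖f x‖ₑ ∂μ := by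
  calc ∫⁻ x, ENNReal.ofReal (hingeSum a |f x|) ∂μ
      = ∫⁻ x, ∑' n, ENNReal.ofReal (max (|f x| - a n) 0) ∂μ :=
        lintegral_congr fun x =>
          ENNReal.ofReal_tsum_of_nonneg (fun n => le_max_right _ _) (hingeSum.summable ha _)
    _ = ∑' n, ∫⁻ x, ENNReal.ofReal (max (|f x| - a n) 0) ∂μ :=
        lintegral_tsum fun n => by fun_prop
    _ ≤ ∑' n, ∫⁻ x in {x | a n < |f x|}, ‖f x‖ₑ ∂μ :=
        ENNReal.tsum_le_tsum fun n => lintegral_ofReal_max_abs_sub_le f (ha₀ n)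

theorem eventually_forall_setLIntegral_abs_gt_lt {F : Set (X → ℝ)}
    (hmeas : ∀ f ∈ F, Measurable f)
    (hbdd : ∃ C : ℝ≥0∞, C < ⊤ ∧ ∀ f ∈ F, ∫⁻ x, ‖f x‖ₑ ∂μ ≤ C)
    (hequi : ∀ ε : ℝ≥0∞, 0 < ε → ∃ δ : ℝ≥0∞, 0 < δ ∧ ∀ B : Set X, MeasurableSet B →
      μ B < δ → ∀ f ∈ F, ∫⁻ x in B, ‖f x‖ₑ ∂μ < ε) {ε : ℝ≥0∞} (hε : 0 < ε) :
    ∀ᶠ M : ℝ in atTop, ∀ f ∈ F, ∫⁻ x in {x | M < |f x|}, ‖f x‖ₑ ∂μ < ε := by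
  obtain ⟨C, hC, hCF⟩ := hbdd
  obtain ⟨δ, hδ, hδF⟩ := hequi ε hε
  have hCM : Tendsto (fun M => C / ENNReal.ofReal M) atTop (nhds 0) := by
    simpa using ENNReal.Tendsto.const_div ENNReal.tendsto_ofReal_atTop (Or.inr hC.ne)
  filter_upwards [hCM.eventually_lt_const hδ, eventually_gt_atTop 0] with M hM hM₀ f hf
  refine hδF _ (measurableSet_lt measurable_const (hmeas f hf).abs) ?_ f hf
  calc μ {x | M < |f x|} ≤ μ {x | ENNReal.ofReal M ≤ ‖f x‖ₑ} := by
        refine measure_mono fun x hx => ?_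
        rw [Set.mem_ofPred_eq, Real.enorm_eq_ofReal_abs]
        exact ENNReal.ofReal_le_ofReal hx.le
    _ ≤ (∫⁻ x, ‖f x‖ₑ ∂μ) / ENNReal.ofReal M :=
        meas_ge_le_lintegral_div (hmeas f hf).enorm.aemeasurable
          (by simpa using hM₀) ENNReal.ofReal_ne_top
    _ ≤ C / ENNReal.ofReal M := by gcongr; exact hCF f hf
    _ < δ := hM

end

theorem stmt_6_general {X : Type*} [MeasurableSpace X] (μ : Measure X)
    (F : Set (X → ℝ)) (hmeas : ∀ f ∈ F, Measurable f)
    (hbdd : ∃ C : ℝ≥0∞, C < ⊤ ∧ ∀ f ∈ F, ∫⁻ x, ‖f x‖₊ ∂μ ≤ C)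
    (hequi : ∀ ε : ℝ≥0∞, 0 < ε → ∃ δ : ℝ≥0∞, 0 < δ ∧ ∀ B : Set X, MeasurableSet B →
      μ B < δ → ∀ f ∈ F, ∫⁻ x in B, ‖f x‖₊ ∂μ < ε) :
    ∃ θ : ℝ → ℝ, (∀ t, 0 ≤ θ t) ∧ MonotoneOn θ (Set.Ici 0) ∧
      ConvexOn ℝ (Set.Ici 0) θ ∧ ContinuousOn θ (Set.Ici 0) ∧
      Tendsto (fun t => θ t / t) atTop atTop ∧
      ∀ f ∈ F, ∫⁻ x, ENNReal.ofReal (θ |f x|) ∂μ ≤ 1 := by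
  obtain ⟨ε, hε₀, hε⟩ := ENNReal.exists_pos_sum_of_countable one_ne_zero ℕ
  have hthreshold (n : ℕ) := ((eventually_forall_setLIntegral_abs_gt_lt hmeas hbdd hequi
    (ENNReal.coe_pos.2 (hε₀ n))).and (eventually_ge_atTop (n : ℝ))).exists
  choose a htail hna using hthreshold
  have ha : Tendsto a atTop atTop :=
    tendsto_atTop_mono hna tendsto_natCast_atTop_atTop
  refine ⟨hingeSum a, hingeSum.nonneg, (hingeSum.monotone ha).monotoneOn _,
    (hingeSum.convexOn ha).subset (Set.subset_univ _) (convex_Ici 0),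
    (hingeSum.continuous ha).continuousOn, hingeSum.tendsto_div_atTop ha, fun f hf => ?_⟩
  calc ∫⁻ x, ENNReal.ofReal (hingeSum a |f x|) ∂μ
      ≤ ∑' n, ∫⁻ x in {x | a n < |f x|}, ‖f x‖ₑ ∂μ :=
        lintegral_ofReal_hingeSum_abs_le ha (fun n => (Nat.cast_nonneg n).trans (hna n))
          (hmeas f hf).aemeasurable
    _ ≤ ∑' n, (ε n : ℝ≥0∞) := ENNReal.tsum_le_tsum fun n => (htail n f hf).le
    _ ≤ 1 := hε.le

/-- De la Vallée-Poussin criterion: for a bounded equi-integrable family `F ⊂ L¹(X,μ)`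
there is a nondecreasing convex continuous superlinear function `θ : [0,∞) → [0,∞)` with
`∫ θ(|f|) dμ ≤ 1` for all `f ∈ F`. -/
theorem stmt_6 {X : Type*} [MeasurableSpace X] (μ : Measure X) [IsFiniteMeasure μ]
    (F : Set (X → ℝ)) (hmeas : ∀ f ∈ F, Measurable f)
    (hbdd : ∃ C : ℝ≥0∞, C < ⊤ ∧ ∀ f ∈ F, ∫⁻ x, ‖f x‖₊ ∂μ ≤ C)
    (hequi : ∀ ε : ℝ≥0∞, 0 < ε → ∃ δ : ℝ≥0∞, 0 < δ ∧ ∀ B : Set X, MeasurableSet B →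
      μ B < δ → ∀ f ∈ F, ∫⁻ x in B, ‖f x‖₊ ∂μ < ε) :
    ∃ θ : ℝ → ℝ, (∀ t, 0 ≤ θ t) ∧ MonotoneOn θ (Set.Ici 0) ∧
      ConvexOn ℝ (Set.Ici 0) θ ∧ ContinuousOn θ (Set.Ici 0) ∧
      Tendsto (fun t => θ t / t) atTop atTop ∧
      ∀ f ∈ F, ∫⁻ x, ENNReal.ofReal (θ |f x|) ∂μ ≤ 1 :=
  stmt_6_general μ F hmeas hbdd hequi
end

section
/- Let Z₀ be a Hilbert space, I ⊂ ℝ a bounded interval containing s, and v : I × Z₁ → Z₀ a vector field (Z₁ ⊂ Z₀ continuously embedded Hilbert spaces) satisfying ‖v(t,x) − v(t,y)‖_{Z₀} ≤ C·(‖x‖²_{Z₁} + ‖y‖²_{Z₁})·‖x − y‖_{Z₀} for all t ∈ I and x, y ∈ Z₁ with ‖x‖_{Z₀}, ‖y‖_{Z₀} ≤ M, where M bounds both solutions. If γ₁, γ₂ ∈ L²(I, Z₁) ∩ W^{1,1}(I, Z₀) both satisfy γᵢ(t) = γᵢ(s) + ∫_s^t v(τ, γᵢ(τ)) dτ in Z₀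 for all t ∈ I, and γ₁(s) = γ₂(s), then γ₁ = γ₂ on I. -/
open MeasureTheory Set intervalIntegral

lemma gronwall_core (g φ : ℝ → ℝ) (s b : ℝ) (hsb : s ≤ b)
    (hg : IntervalIntegrable g volume s b) (hg0 : ∀ τ ∈ Set.Icc s b, 0 ≤ g τ)
    (hφc : ContinuousOn φ (Set.Icc s b)) (hφ0 : ∀ τ ∈ Set.Icc s b, 0 ≤ φ τ)
    (hineq : ∀ t ∈ Set.Icc s b, φ t ≤ ∫ τ in s..t, g τ * φ τ) :
    ∀ t ∈ Set.Icc s b, φ t = 0 := by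
  have huIcc : uIcc s b = Icc s b := uIcc_of_le hsb
  have hgφ : ∀ x ∈ Icc s b, ∀ y ∈ Icc s b,
      IntervalIntegrable (fun τ => g τ * φ τ) volume x y := by
    intro x hx y hy
    have hsub : uIcc x y ⊆ uIcc s b := by rw [huIcc]; exact uIcc_subset_Icc hx hy
    exact (hg.mono_set hsub).mul_continuousOn (hφc.mono (hsub.trans huIcc.subset))
  set E : Set ℝ := {t | t ∈ Icc s b ∧ ∀ τ ∈ Icc s t, φ τ = 0} with hE
  have hsE : s ∈ E := by
    refine ⟨⟨le_rfl, hsb⟩, fun τ hτ => ?_⟩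
    have hτs : τ = s := le_antisymm hτ.2 hτ.1
    subst hτs
    have h1 := hineq τ ⟨le_rfl, hsb⟩
    rw [integral_same] at h1
    exact le_antisymm h1 (hφ0 τ ⟨le_rfl, hsb⟩)
  have hbdd : BddAbove E := ⟨b, fun t ht => ht.1.2⟩
  have hne : E.Nonempty := ⟨s, hsE⟩
  set t₀ := sSup E with ht₀
  have ht₀mem : t₀ ∈ Icc s b := ⟨le_csSup hbdd hsE, csSup_le hne fun t ht => ht.1.2⟩
  have hzero : ∀ τ ∈ Ico s t₀, φ τ = 0 := by
    intro τ hτ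
    obtain ⟨e, heE, hτe⟩ := exists_lt_of_lt_csSup hne hτ.2
    exact heE.2 τ ⟨hτ.1, hτe.le⟩
  have hI0 : ∀ x ∈ Icc s t₀, (∫ τ in s..x, g τ * φ τ) = 0 := by
    intro x hx
    rw [integral_of_le hx.1, integral_Ioc_eq_integral_Ioo,
      setIntegral_congr_fun measurableSet_Ioo
        (fun τ hτ => by rw [hzero τ ⟨hτ.1.le, hτ.2.trans_le hx.2⟩, mul_zero]),
      integral_zero]
  have hφt₀ : φ t₀ = 0 := by
    have h1 := hineq t₀ ht₀mem
    rw [hI0 t₀ ⟨ht₀mem.1, le_rfl⟩] at h1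
    exact le_antisymm h1 (hφ0 t₀ ht₀mem)
  have ht₀E : t₀ ∈ E := by
    refine ⟨ht₀mem, fun τ hτ => ?_⟩
    rcases eq_or_lt_of_le hτ.2 with h | h
    · rw [h]; exact hφt₀
    · exact hzero τ ⟨hτ.1, h⟩
  have ht₀b : t₀ = b := by
    by_contra hne'
    have hlt : t₀ < b := lt_of_le_of_ne ht₀mem.2 hne'
    -- primitive of g from t₀ is continuous at t₀
    have hgt₀b : IntervalIntegrable g volume t₀ b :=
      hg.mono_set (by rw [huIcc, uIcc_of_le hlt.le]; exact Icc_subset_Icc ht₀mem.1 le_rfl)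
    have hGc : ContinuousOn (fun x => ∫ τ in t₀..x, g τ) (uIcc t₀ b) :=
      continuousOn_primitive_interval' hgt₀b left_mem_uIcc
    have hG0 : (∫ τ in t₀..t₀, g τ) = 0 := integral_same
    have hcwa : Filter.Tendsto (fun x => ∫ τ in t₀..x, g τ) (nhdsWithin t₀ (uIcc t₀ b)) (nhds 0) := by
      have := hGc t₀ left_mem_uIcc
      rwa [ContinuousWithinAt, hG0] at this
    have hev : ∀ᶠ x in nhdsWithin t₀ (Set.Ioc t₀ b),
        (∫ τ in t₀..x, g τ) < 1 ∧ x ∈ Set.Ioc t₀ b := by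
      refine Filter.Eventually.and ?_ self_mem_nhdsWithin
      refine Filter.Eventually.filter_mono (nhdsWithin_mono _ ?_) (hcwa.eventually_lt_const one_pos)
      rw [uIcc_of_le hlt.le]; exact Ioc_subset_Icc_self
    have : (nhdsWithin t₀ (Set.Ioc t₀ b)).NeBot := left_nhdsWithin_Ioc_neBot hlt
    obtain ⟨u, hqu, hu⟩ := hev.exists
    -- max of φ on [t₀, u]
    have hsubIcc : Icc t₀ u ⊆ Icc s b := Icc_subset_Icc ht₀mem.1 hu.2
    obtain ⟨τs, hτs, hmax⟩ := isCompact_Icc.exists_isMaxOn ⟨t₀, left_mem_Icc.2 hu.1.le⟩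
      (hφc.mono hsubIcc)
    have hmax' : ∀ x ∈ Icc t₀ u, φ x ≤ φ τs := hmax
    set A := φ τs with hA
    have hA0 : 0 ≤ A := hφ0 τs (hsubIcc hτs)
    have hAle : A ≤ (∫ τ in t₀..u, g τ) * A := by
      have hτsmem : τs ∈ Icc s b := hsubIcc hτs
      have h1 : φ τs ≤ ∫ τ in s..τs, g τ * φ τ := hineq τs hτsmem
      have hadd : (∫ τ in s..τs, g τ * φ τ)
          = (∫ τ in s..t₀, g τ * φ τ) + ∫ τ in t₀..τs, g τ * φ τ :=
        (integral_add_adjacent_intervals (hgφ s ⟨le_rfl, hsb⟩ t₀ ht₀mem)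
          (hgφ t₀ ht₀mem τs hτsmem)).symm
      rw [hadd, hI0 t₀ ⟨ht₀mem.1, le_rfl⟩, zero_add] at h1
      have h2 : (∫ τ in t₀..τs, g τ * φ τ) ≤ ∫ τ in t₀..τs, g τ * A := by
        refine integral_mono_on hτs.1 (hgφ t₀ ht₀mem τs hτsmem)
          ((hg.mono_set ?_).mul_const A) (fun x hx => ?_)
        · rw [huIcc, uIcc_of_le hτs.1]
          exact Icc_subset_Icc ht₀mem.1 (hτs.2.trans hu.2)
        · exact mul_le_mul_of_nonneg_left
            (hmax' x ⟨hx.1, hx.2.trans hτs.2⟩)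
            (hg0 x ⟨ht₀mem.1.trans hx.1, hx.2.trans (hτs.2.trans hu.2)⟩)
      have h3 : (∫ τ in t₀..τs, g τ * A) = (∫ τ in t₀..τs, g τ) * A :=
        integral_mul_const A g
      have hgu : IntervalIntegrable g volume t₀ u := by
        refine hg.mono_set ?_
        rw [huIcc, uIcc_of_le hu.1.le]
        exact Icc_subset_Icc ht₀mem.1 hu.2
      have h4 : (∫ τ in t₀..τs, g τ) ≤ ∫ τ in t₀..u, g τ := by
        refine integral_mono_interval le_rfl hτs.1 hτs.2 ?_ hgu
        filter_upwards [ae_restrict_mem measurableSet_Ioc] with x hx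
        exact hg0 x ⟨ht₀mem.1.trans hx.1.le, hx.2.trans hu.2⟩
      calc A ≤ ∫ τ in t₀..τs, g τ * φ τ := h1
        _ ≤ (∫ τ in t₀..τs, g τ) * A := by rw [← h3]; exact h2
        _ ≤ (∫ τ in t₀..u, g τ) * A := mul_le_mul_of_nonneg_right h4 hA0
    have hAzero : A = 0 := by
      rcases lt_or_eq_of_le hA0 with hpos | h
      · exfalso
        have : (∫ τ in t₀..u, g τ) * A < 1 * A := mul_lt_mul_of_pos_right hqu hpos
        rw [one_mul] at this
        exact absurd (hAle.trans_lt this) (lt_irrefl A)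
      · exact h.symm
    have huE : u ∈ E := by
      refine ⟨⟨ht₀mem.1.trans hu.1.le, hu.2⟩, fun τ hτ => ?_⟩
      rcases le_or_gt τ t₀ with h | h
      · exact ht₀E.2 τ ⟨hτ.1, h⟩
      · exact le_antisymm ((hmax' τ ⟨h.le, hτ.2⟩).trans hAzero.le)
          (hφ0 τ ⟨hτ.1, hτ.2.trans hu.2⟩)
    exact absurd (le_csSup hbdd huE) (not_le.2 hu.1)
  intro t ht
  exact ht₀E.2 t ⟨ht.1, ht.2.trans_eq ht₀b.symm⟩

/-- Uniqueness of `L²(I,Z₁) ∩ W^{1,1}(I,Z₀)` solutions of a Cauchy problem whose vector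
field `v : I × Z₁ → Z₀` satisfies the local Lipschitz estimate
`‖v(t,x) − v(t,y)‖_{Z₀} ≤ C (‖x‖²_{Z₁} + ‖y‖²_{Z₁}) ‖x − y‖_{Z₀}` on `Z₀`-balls of radius `M`:
two solutions of the Duhamel equation with the same initial datum coincide. -/
theorem stmt_14 {Z₁ Z₀ : Type*}
    [NormedAddCommGroup Z₁] [InnerProductSpace ℝ Z₁]
    [NormedAddCommGroup Z₀] [InnerProductSpace ℝ Z₀] [CompleteSpace Z₀]
    (ι : Z₁ →L[ℝ] Z₀) (hι : Function.Injective ι)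
    (a b s : ℝ) (hs : s ∈ Set.Icc a b)
    (v : ℝ → Z₁ → Z₀) (M C : ℝ)
    (hv : ∀ t ∈ Set.Icc a b, ∀ x y : Z₁, ‖ι x‖ ≤ M → ‖ι y‖ ≤ M →
      ‖v t x - v t y‖ ≤ C * (‖x‖ ^ 2 + ‖y‖ ^ 2) * ‖ι x - ι y‖)
    (γ₁ γ₂ : ℝ → Z₁)
    (hL2₁ : IntegrableOn (fun t => ‖γ₁ t‖ ^ 2) (Set.Icc a b))
    (hL2₂ : IntegrableOn (fun t => ‖γ₂ t‖ ^ 2) (Set.Icc a b))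
    (hM₁ : ∀ t ∈ Set.Icc a b, ‖ι (γ₁ t)‖ ≤ M)
    (hM₂ : ∀ t ∈ Set.Icc a b, ‖ι (γ₂ t)‖ ≤ M)
    (hW₁ : IntegrableOn (fun t => v t (γ₁ t)) (Set.Icc a b))
    (hW₂ : IntegrableOn (fun t => v t (γ₂ t)) (Set.Icc a b))
    (hd₁ : ∀ t ∈ Set.Icc a b, ι (γ₁ t) = ι (γ₁ s) + ∫ τ in s..t, v τ (γ₁ τ))
    (hd₂ : ∀ t ∈ Set.Icc a b, ι (γ₂ t) = ι (γ₂ s) + ∫ τ in s..t, v τ (γ₂ τ))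
    (hinit : γ₁ s = γ₂ s) :
    ∀ t ∈ Set.Icc a b, γ₁ t = γ₂ t := by
  have hab : a ≤ b := hs.1.trans hs.2
  set f : ℝ → Z₀ := fun τ => v τ (γ₁ τ) - v τ (γ₂ τ) with hfdef
  set φ : ℝ → ℝ := fun t => ‖ι (γ₁ t) - ι (γ₂ t)‖ with hφdef
  set g : ℝ → ℝ := fun τ => |C| * (‖γ₁ τ‖ ^ 2 + ‖γ₂ τ‖ ^ 2) with hgdef
  have hgInt : IntegrableOn g (Set.Icc a b) := (hL2₁.add hL2₂).const_mul |C|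
  have hg0 : ∀ τ, 0 ≤ g τ := fun τ =>
    mul_nonneg (abs_nonneg C) (add_nonneg (sq_nonneg _) (sq_nonneg _))
  have hfInt : IntegrableOn f (Set.Icc a b) := hW₁.sub hW₂
  have hgII : ∀ x ∈ Set.Icc a b, ∀ y ∈ Set.Icc a b, IntervalIntegrable g volume x y :=
    fun x hx y hy => (hgInt.mono_set (uIcc_subset_Icc hx hy)).intervalIntegrable
  have hdiff : ∀ t ∈ Set.Icc a b, ι (γ₁ t) - ι (γ₂ t) = ∫ τ in s..t, f τ := by
    intro t ht
    have h1 : IntervalIntegrable (fun τ => v τ (γ₁ τ)) volume s t :=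
      (hW₁.mono_set (uIcc_subset_Icc hs ht)).intervalIntegrable
    have h2 : IntervalIntegrable (fun τ => v τ (γ₂ τ)) volume s t :=
      (hW₂.mono_set (uIcc_subset_Icc hs ht)).intervalIntegrable
    rw [hd₁ t ht, hd₂ t ht, hinit, hfdef, intervalIntegral.integral_sub h1 h2]
    abel
  have hFc : ContinuousOn (fun t => ∫ τ in s..t, f τ) (Set.Icc a b) := by
    have h := intervalIntegral.continuousOn_primitive_interval'
      ((hfInt.mono_set (by rw [uIcc_of_le hab])).intervalIntegrable (μ := volume)
        (a := a) (b := b))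
      (by rw [uIcc_of_le hab]; exact hs)
    rwa [uIcc_of_le hab] at h
  have hφc : ContinuousOn φ (Set.Icc a b) :=
    ContinuousOn.congr hFc.norm (fun t ht => by simp only [hφdef]; rw [hdiff t ht])
  have hub : ∀ τ ∈ Set.Icc a b, ‖f τ‖ ≤ g τ * φ τ := by
    intro τ hτ
    refine (hv τ hτ (γ₁ τ) (γ₂ τ) (hM₁ τ hτ) (hM₂ τ hτ)).trans ?_
    exact mul_le_mul_of_nonneg_right
      (mul_le_mul_of_nonneg_right (le_abs_self C)
        (add_nonneg (sq_nonneg _) (sq_nonneg _)))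
      (norm_nonneg _)
  have hmono : ∀ x ∈ Set.Icc a b, ∀ y ∈ Set.Icc a b, x ≤ y →
      (∫ τ in x..y, ‖f τ‖) ≤ ∫ τ in x..y, g τ * φ τ := by
    intro x hx y hy hxy
    refine intervalIntegral.integral_mono_on hxy
      ((hfInt.mono_set (uIcc_subset_Icc hx hy)).intervalIntegrable.norm)
      ((hgII x hx y hy).mul_continuousOn (hφc.mono (uIcc_subset_Icc hx hy)))
      (fun τ hτ => hub τ ⟨hx.1.trans hτ.1, hτ.2.trans hy.2⟩)
  -- right of s
  have hzR : ∀ t ∈ Set.Icc s b, φ t = 0 := by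
    refine gronwall_core g φ s b hs.2 (hgII s hs b ⟨hab, le_rfl⟩)
      (fun τ _ => hg0 τ) (hφc.mono (Icc_subset_Icc hs.1 le_rfl))
      (fun τ _ => norm_nonneg _) ?_
    intro t ht
    have htab : t ∈ Set.Icc a b := ⟨hs.1.trans ht.1, ht.2⟩
    have h0 : φ t = ‖∫ τ in s..t, f τ‖ := by
      simp only [hφdef]; rw [hdiff t htab]
    rw [h0]
    exact (intervalIntegral.norm_integral_le_integral_norm ht.1).trans
      (hmono s hs t htab ht.1)
  -- left of s, by reflection about s
  have hsb' : s ≤ 2 * s - a := by linarith [hs.1]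
  have hmap : ∀ x ∈ Set.Icc s (2 * s - a), 2 * s - x ∈ Set.Icc a s :=
    fun x hx => ⟨by linarith [hx.2], by linarith [hx.1]⟩
  have hg'II : IntervalIntegrable (fun x => g (2 * s - x)) volume s (2 * s - a) := by
    have h2 := (hgII a ⟨le_rfl, hab⟩ s hs).comp_sub_left (2 * s)
    have h3 : 2 * s - s = s := by ring
    rw [h3] at h2
    exact h2.symm
  have hφ'c : ContinuousOn (fun x => φ (2 * s - x)) (Set.Icc s (2 * s - a)) := by
    refine ContinuousOn.comp (g := φ) (f := fun x : ℝ => 2 * s - x) hφc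
      ((continuous_const.sub continuous_id).continuousOn) ?_
    exact fun x hx => ⟨(hmap x hx).1, (hmap x hx).2.trans hs.2⟩
  have hzL : ∀ t ∈ Set.Icc s (2 * s - a), φ (2 * s - t) = 0 := by
    refine gronwall_core (fun x => g (2 * s - x)) (fun x => φ (2 * s - x)) s (2 * s - a)
      hsb' hg'II (fun τ _ => hg0 _) hφ'c (fun τ _ => norm_nonneg _) ?_
    intro t ht
    have ht' : 2 * s - t ∈ Set.Icc a s := hmap t ht
    have ht'ab : 2 * s - t ∈ Set.Icc a b := ⟨ht'.1, ht'.2.trans hs.2⟩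
    have key : φ (2 * s - t) ≤ ∫ τ in (2 * s - t)..s, g τ * φ τ := by
      have h0 : φ (2 * s - t) = ‖∫ τ in (2 * s - t)..s, f τ‖ := by
        simp only [hφdef]
        rw [hdiff (2 * s - t) ht'ab, intervalIntegral.integral_symm, norm_neg]
      rw [h0]
      exact (intervalIntegral.norm_integral_le_integral_norm ht'.2).trans
        (hmono (2 * s - t) ht'ab s hs ht'.2)
    have hcs : (∫ τ in s..t, g (2 * s - τ) * φ (2 * s - τ))
        = ∫ τ in (2 * s - t)..s, g τ * φ τ := by
      have h := intervalIntegral.integral_comp_sub_left (a := s) (b := t)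
        (fun τ => g τ * φ τ) (2 * s)
      have h3 : 2 * s - s = s := by ring
      rw [h3] at h
      exact h
    rw [hcs]
    exact key
  have hφzero : ∀ t ∈ Set.Icc a b, φ t = 0 := by
    intro t ht
    rcases le_total s t with h | h
    · exact hzR t ⟨h, ht.2⟩
    · have h1 := hzL (2 * s - t) ⟨by linarith, by linarith [ht.1]⟩
      have h2 : 2 * s - (2 * s - t) = t := by ring
      rwa [h2] at h1
  intro t ht
  have h := hφzero t ht
  have h' : ι (γ₁ t) - ι (γ₂ t) = 0 := by
    rw [hφdef] at h
    exact norm_eq_zero.mp h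
  exact hι (sub_eq_zero.mp h')
end

section
/- Let I be a bounded interval, H a Hilbert space, and (γ_n) a sequence of continuous curves γ_n : Ī → H such that ‖γ_n(t) − γ_n(t₀)‖_H ≤ ∫_{t₀}^t m_n(τ) dτ for all t₀ ≤ t in Ī, where m_n ∈ L¹(I) converges weakly in L¹(I) (σ(L¹, L^∞)) to m ∈ L¹(I). Suppose γ_n(t) → γ(t) weakly in H for every t ∈ Ī. Then ‖γ(t) − γ(t₀)‖_H ≤ ∫_{t₀}^t m(τ) dτ for all t₀ ≤ t; in particular γ is (norm) continuous from Ī to H. -/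
open MeasureTheory Filter RealInnerProductSpace

/-! Testing the weak convergence `γ_n(t) - γ_n(t₀) ⇀ γ(t) - γ(t₀) =: v` against `v` itself gives
`‖v‖² = lim ⟪γ_n(t) - γ_n(t₀), v⟫ ≤ lim (∫_{t₀}^t m_n) ‖v‖ = (∫_{t₀}^t m) ‖v‖`, where the integrals
converge by testing `m_n ⇀ m` against the indicator of `[t₀, t]`. Continuity of `γ` then follows
from the absolute continuity of the primitive of `m`. -/

theorem norm_le_of_tendsto_inner_of_norm_le {H : Type*} [NormedAddCommGroup H]
    [InnerProductSpace ℝ H] {ι : Type*} {l : Filter ι} [l.NeBot] {x : ι → H} {y : H}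
    {c : ι → ℝ} {L : ℝ} (hx : ∀ e : H, Tendsto (fun i => ⟪x i, e⟫) l (nhds ⟪y, e⟫))
    (hc : Tendsto c l (nhds L)) (hxc : ∀ i, ‖x i‖ ≤ c i) : ‖y‖ ≤ L := by
  have hL : 0 ≤ L := ge_of_tendsto' hc fun i => (norm_nonneg _).trans (hxc i)
  have hsq : ‖y‖ ^ 2 ≤ L * ‖y‖ := by
    rw [← real_inner_self_eq_norm_sq]
    refine le_of_tendsto_of_tendsto' (hx y) (hc.mul_const _) fun i => ?_
    calc ⟪x i, y⟫ ≤ ‖x i‖ * ‖y‖ := real_inner_le_norm _ _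
      _ ≤ c i * ‖y‖ := mul_le_mul_of_nonneg_right (hxc i) (norm_nonneg _)
  rcases (norm_nonneg y).eq_or_lt with hy | hy
  · exact hy ▸ hL
  · nlinarith

theorem setIntegral_mul_indicator_one_eq_intervalIntegral (f : ℝ → ℝ) {a b t₀ t : ℝ}
    (ha : a ≤ t₀) (ht₀ : t₀ ≤ t) (hb : t ≤ b) :
    ∫ x in Set.Icc a b, f x * (Set.Icc t₀ t).indicator 1 x = ∫ x in t₀..t, f x := by
  simp_rw [← Set.indicator_mul_right, Pi.one_apply, mul_one]
  rw [setIntegral_indicator measurableSet_Icc,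
    Set.inter_eq_right.mpr (Set.Icc_subset_Icc ha hb), integral_Icc_eq_integral_Ioc,
    intervalIntegral.integral_of_le ht₀]

theorem continuousOn_of_norm_sub_le_intervalIntegral {E : Type*} [SeminormedAddCommGroup E]
    {γ : ℝ → E} {m : ℝ → ℝ} {a b : ℝ} (hm : IntegrableOn m (Set.Icc a b))
    (hγ : ∀ t₀ t : ℝ, a ≤ t₀ → t₀ ≤ t → t ≤ b → ‖γ t - γ t₀‖ ≤ ∫ τ in t₀..t, m τ) :
    ContinuousOn γ (Set.Icc a b) := by
  set F : ℝ → ℝ := fun x => ∫ τ in a..x, m τ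
  have hF : ContinuousOn F (Set.Icc a b) := by
    rcases le_total a b with hab | hab
    · rw [← Set.uIcc_of_le hab] at hm ⊢
      exact intervalIntegral.continuousOn_primitive_interval hm
    · exact (Set.subsingleton_Icc_of_ge hab).continuousOn F
  have hm_int : ∀ x ∈ Set.Icc a b, IntervalIntegrable m volume a x := fun x hx =>
    (intervalIntegrable_iff_integrableOn_Icc_of_le hx.1).mpr
      (hm.mono_set (Set.Icc_subset_Icc le_rfl hx.2))
  have hdist : ∀ u ∈ Set.Icc a b, ∀ w ∈ Set.Icc a b, u ≤ w → dist (γ w) (γ u) ≤ dist (F w) (F u) :=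
    fun u hu w hw huw => by
      rw [dist_eq_norm, Real.dist_eq, intervalIntegral.integral_interval_sub_left (hm_int w hw)
        (hm_int u hu)]
      exact (hγ u w hu.1 huw hw.2).trans (le_abs_self _)
  intro s hs
  rw [ContinuousWithinAt, tendsto_iff_dist_tendsto_zero]
  refine squeeze_zero' (Eventually.of_forall fun _ => dist_nonneg) ?_
    (tendsto_iff_dist_tendsto_zero.mp (hF s hs))
  filter_upwards [self_mem_nhdsWithin] with t ht
  rcases le_total s t with hst | hts
  · exact hdist s hs t ht hst
  · simpa only [dist_comm] using hdist t ht s hs hts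

theorem stmt_15_general {H : Type*} [NormedAddCommGroup H] [InnerProductSpace ℝ H]
    (a b : ℝ) (γn : ℕ → ℝ → H) (γ : ℝ → H) (mn : ℕ → ℝ → ℝ) (m : ℝ → ℝ)
    (hm : IntegrableOn m (Set.Icc a b))
    (hbound : ∀ n, ∀ t₀ t : ℝ, a ≤ t₀ → t₀ ≤ t → t ≤ b →
      ‖γn n t - γn n t₀‖ ≤ ∫ τ in t₀..t, mn n τ)
    (hweakL1 : ∀ φ : ℝ → ℝ, Measurable φ → (∃ C : ℝ, ∀ t, |φ t| ≤ C) →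
      Tendsto (fun n => ∫ t in Set.Icc a b, mn n t * φ t) atTop
        (nhds (∫ t in Set.Icc a b, m t * φ t)))
    (hweakH : ∀ t ∈ Set.Icc a b, ∀ e : H,
      Tendsto (fun n => ⟪γn n t, e⟫) atTop (nhds ⟪γ t, e⟫)) :
    (∀ t₀ t : ℝ, a ≤ t₀ → t₀ ≤ t → t ≤ b → ‖γ t - γ t₀‖ ≤ ∫ τ in t₀..t, m τ) ∧
      ContinuousOn γ (Set.Icc a b) := by
  have key : ∀ t₀ t : ℝ, a ≤ t₀ → t₀ ≤ t → t ≤ b → ‖γ t - γ t₀‖ ≤ ∫ τ in t₀..t, m τ := by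
    intro t₀ t ha ht₀ hb
    have hintegral : Tendsto (fun n => ∫ τ in t₀..t, mn n τ) atTop (nhds (∫ τ in t₀..t, m τ)) := by
      have hφ : ∃ C : ℝ, ∀ x, |(Set.Icc t₀ t).indicator (1 : ℝ → ℝ) x| ≤ C :=
        ⟨1, fun x => by by_cases hx : x ∈ Set.Icc t₀ t <;> simp [hx]⟩
      simpa only [setIntegral_mul_indicator_one_eq_intervalIntegral _ ha ht₀ hb] using
        hweakL1 _ (measurable_one.indicator measurableSet_Icc) hφ
    refine norm_le_of_tendsto_inner_of_norm_le (fun e => ?_) hintegral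
      fun n => hbound n t₀ t ha ht₀ hb
    simpa only [inner_sub_left] using
      (hweakH t ⟨ha.trans ht₀, hb⟩ e).sub (hweakH t₀ ⟨ha, ht₀.trans hb⟩ e)
  exact ⟨key, continuousOn_of_norm_sub_le_intervalIntegral hm key⟩

/-- If continuous curves `γ_n` in a separable Hilbert space satisfy
`‖γ_n(t) − γ_n(t₀)‖ ≤ ∫_{t₀}^t m_n`, where `m_n → m` weakly in `L¹(I)`, and `γ_n(t) ⇀ γ(t)`
weakly in `H` for every `t`, then `‖γ(t) − γ(t₀)‖ ≤ ∫_{t₀}^t m`; in particular `γ` is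
norm continuous on `Ī`. -/
theorem stmt_15 {H : Type*} [NormedAddCommGroup H] [InnerProductSpace ℝ H]
    [SecondCountableTopology H]
    (a b : ℝ) (γn : ℕ → ℝ → H) (γ : ℝ → H) (mn : ℕ → ℝ → ℝ) (m : ℝ → ℝ)
    (hcont : ∀ n, ContinuousOn (γn n) (Set.Icc a b))
    (hmn : ∀ n, IntegrableOn (mn n) (Set.Icc a b)) (hm : IntegrableOn m (Set.Icc a b))
    (hbound : ∀ n, ∀ t₀ t : ℝ, a ≤ t₀ → t₀ ≤ t → t ≤ b →
      ‖γn n t - γn n t₀‖ ≤ ∫ τ in t₀..t, mn n τ)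
    (hweakL1 : ∀ φ : ℝ → ℝ, Measurable φ → (∃ C : ℝ, ∀ t, |φ t| ≤ C) →
      Tendsto (fun n => ∫ t in Set.Icc a b, mn n t * φ t) atTop
        (nhds (∫ t in Set.Icc a b, m t * φ t)))
    (hweakH : ∀ t ∈ Set.Icc a b, ∀ e : H,
      Tendsto (fun n => ⟪γn n t, e⟫) atTop (nhds ⟪γ t, e⟫)) :
    (∀ t₀ t : ℝ, a ≤ t₀ → t₀ ≤ t → t ≤ b → ‖γ t - γ t₀‖ ≤ ∫ τ in t₀..t, m τ) ∧
      ContinuousOn γ (Set.Icc a b) :=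
  stmt_15_general a b γn γ mn m hm hbound hweakL1 hweakH
end
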